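/- arXiv:1505.04452 — 3 statements merged into one kernel-verified Lean document; each statement's English description precedes it below -/
import Mathlib

section
/- Let X be a compact metric space, let {(A_i, B_i) : i ∈ Γ} be an essential family of pairs of disjoint closed subsets of X, and let n ∈ Γ. Suppose S ⊆ X meets every continuum from A_n to B_n. For each i ∈ Γ \ {n} let U_i and V_i be disjoint closed neighborhoods of A_i and B_i respectively. Then the family {(U_i ∩ S, V_i ∩ S) : i ∈ Γ \ {n}} of pairs of disjoint closed subsets of the subspace S is essential in S. -/
open Set

/-- A separator between `A` and `B` in a topological space: a closed set `L` whose
complement is the union of two disjoint open sets containing `A` and `B` respectively. -/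
def IsSeparator {X : Type*} [TopologicalSpace X] (A B L : Set X) : Prop :=
  IsClosed L ∧ ∃ U V : Set X, IsOpen U ∧ IsOpen V ∧ Disjoint U V ∧
    A ⊆ U ∧ B ⊆ V ∧ Lᶜ = U ∪ V

/-- A family of pairs of sets is essential if every choice of separators has
nonempty intersection. -/
def IsEssentialFamily {X : Type*} [TopologicalSpace X] {Γ : Type*}
    (A B : Γ → Set X) : Prop :=
  ∀ L : Γ → Set X, (∀ i, IsSeparator (A i) (B i) (L i)) → (⋂ i, L i).Nonempty

section Aux

open Metric

/-- In a metric space, separated sets have disjoint open neighborhoods. -/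
lemma separatedNhds_of_separated {X : Type*} [MetricSpace X] {s t : Set X}
    (h1 : Disjoint (closure s) t) (h2 : Disjoint s (closure t)) : SeparatedNhds s t := by
  rcases s.eq_empty_or_nonempty with rfl | hs
  · exact ⟨∅, univ, isOpen_empty, isOpen_univ, Subset.rfl, subset_univ t, disjoint_bot_left⟩
  rcases t.eq_empty_or_nonempty with rfl | ht
  · exact ⟨univ, ∅, isOpen_univ, isOpen_empty, subset_univ s, Subset.rfl, disjoint_bot_right⟩
  refine ⟨{x | infDist x s < infDist x t}, {x | infDist x t < infDist x s}, ?_, ?_, ?_, ?_, ?_⟩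
  · exact isOpen_lt (continuous_infDist_pt s) (continuous_infDist_pt t)
  · exact isOpen_lt (continuous_infDist_pt t) (continuous_infDist_pt s)
  · intro x hx
    have h0 : infDist x s = 0 := infDist_zero_of_mem hx
    have hpos : 0 < infDist x t := by
      rw [← infDist_closure]
      exact (isClosed_closure.notMem_iff_infDist_pos (ht.mono subset_closure)).1
        (disjoint_left.1 h2 hx)
    simpa [h0] using hpos
  · intro x hx
    have h0 : infDist x t = 0 := infDist_zero_of_mem hx
    have hpos : 0 < infDist x s := by
      rw [← infDist_closure]
      exact (isClosed_closure.notMem_iff_infDist_pos (hs.mono subset_closure)).1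
        (disjoint_right.1 h1 hx)
    simpa [h0] using hpos
  · refine disjoint_left.2 fun x hx hx' => ?_
    exact absurd (mem_setOf_eq ▸ hx') (not_lt.2 (le_of_lt hx))

/-- In a compact T2 space, if no connected component of a point of `A'` meets `B'`,
then there is a clopen set containing `A'` and disjoint from `B'`. -/
lemma exists_clopen_sep {α : Type*} [TopologicalSpace α] [T2Space α] [CompactSpace α]
    {A' B' : Set α} (hA' : IsClosed A') (hB' : IsClosed B')
    (h : ∀ x ∈ A', connectedComponent x ∩ B' = ∅) :
    ∃ Z : Set α, IsClopen Z ∧ A' ⊆ Z ∧ Z ∩ B' = ∅ := by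
  have key : ∀ x ∈ A', ∃ Z : Set α, IsClopen Z ∧ x ∈ Z ∧ Z ∩ B' = ∅ := by
    intro x hx
    have hcc := connectedComponent_eq_iInter_isClopen x
    have hempty : (B' ∩ ⋂ Z : {Z : Set α // IsClopen Z ∧ x ∈ Z}, (Z : Set α)) = ∅ := by
      rw [← hcc] at *
      rw [inter_comm]; exact h x hx
    obtain ⟨t, ht⟩ := hB'.isCompact.elim_finite_subfamily_closed _
      (fun Z : {Z : Set α // IsClopen Z ∧ x ∈ Z} => Z.2.1.isClosed) hempty
    refine ⟨⋂ Z ∈ t, (Z : Set α), ?_, ?_, ?_⟩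
    · exact isClopen_biInter_finset fun Z _ => Z.2.1
    · exact mem_iInter₂.2 fun Z _ => Z.2.2
    · rw [inter_comm]; exact ht
  choose! Z hZc hZx hZB using key
  have hcover : A' ⊆ ⋃ x ∈ A', Z x := fun x hx => mem_biUnion hx (hZx x hx)
  obtain ⟨t, htA, htf, hts⟩ := hA'.isCompact.elim_finite_subcover_image
    (fun x hx => (hZc x hx).isOpen) hcover
  refine ⟨⋃ x ∈ t, Z x, ?_, hts, ?_⟩
  · exact htf.isClopen_biUnion fun x hx => hZc x (htA hx)
  · rw [iUnion₂_inter]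
    simp only [iUnion_eq_empty]
    exact fun x hx => hZB x (htA hx)

/-- Extension of a separator on a subset `S` to a separator of the whole space. -/
lemma sep_ext {X : Type*} [MetricSpace X] {Aset Bset Uc Vc S U' V' : Set X}
    (hAc : IsClosed Aset) (hBc : IsClosed Bset)
    (hABd : Disjoint Aset Bset) (hUVd : Disjoint Uc Vc)
    (hAint : Aset ⊆ interior Uc) (hBint : Bset ⊆ interior Vc)
    (hU'o : ∃ O, IsOpen O ∧ U' = O ∩ S) (hV'o : ∃ O, IsOpen O ∧ V' = O ∩ S)
    (hd : Disjoint U' V') (hUS : Uc ∩ S ⊆ U') (hVS : Vc ∩ S ⊆ V') :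
    ∃ M, IsSeparator Aset Bset M ∧ M ∩ S ⊆ S \ (U' ∪ V') := by
  obtain ⟨OU, hOU, rfl⟩ := hU'o
  obtain ⟨OV, hOV, rfl⟩ := hV'o
  set U' := OU ∩ S
  set V' := OV ∩ S
  have hU'S : U' ⊆ S := inter_subset_right
  have hV'S : V' ⊆ S := inter_subset_right
  have claim1 : Aset ∩ closure V' = ∅ := by
    by_contra h
    obtain ⟨x, hxA, hxV⟩ := nonempty_iff_ne_empty.2 h
    obtain ⟨y, hy1, hy2⟩ := mem_closure_iff.1 hxV _ isOpen_interior (hAint hxA)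
    exact absurd rfl (hd.ne_of_mem (hUS ⟨interior_subset hy1, hV'S hy2⟩) hy2)
  have claim2 : Bset ∩ closure U' = ∅ := by
    by_contra h
    obtain ⟨x, hxB, hxU⟩ := nonempty_iff_ne_empty.2 h
    obtain ⟨y, hy1, hy2⟩ := mem_closure_iff.1 hxU _ isOpen_interior (hBint hxB)
    exact absurd rfl (hd.ne_of_mem hy2 (hVS ⟨interior_subset hy1, hU'S hy2⟩))
  have claim3 : U' ∩ closure V' = ∅ := by
    by_contra h
    obtain ⟨x, hxU, hxV⟩ := nonempty_iff_ne_empty.2 h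
    obtain ⟨y, hy1, hy2⟩ := mem_closure_iff.1 hxV _ hOU hxU.1
    exact absurd rfl (hd.ne_of_mem ⟨hy1, hV'S hy2⟩ hy2)
  have claim4 : V' ∩ closure U' = ∅ := by
    by_contra h
    obtain ⟨x, hxV, hxU⟩ := nonempty_iff_ne_empty.2 h
    obtain ⟨y, hy1, hy2⟩ := mem_closure_iff.1 hxU _ hOV hxV.1
    exact absurd rfl (hd.ne_of_mem hy2 ⟨hy1, hU'S hy2⟩)
  set K := closure U' ∩ closure V' with hK
  set E₁ := Aset ∪ closure U' with hE₁
  set E₂ := Bset ∪ closure V' with hE₂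
  have hE₁c : IsClosed E₁ := hAc.union isClosed_closure
  have hE₂c : IsClosed E₂ := hBc.union isClosed_closure
  have hE12 : E₁ ∩ E₂ ⊆ K := by
    rintro x ⟨h1 | h1, h2 | h2⟩
    · exact absurd rfl (hABd.ne_of_mem h1 h2)
    · exact (eq_empty_iff_forall_notMem.1 claim1 x ⟨h1, h2⟩).elim
    · exact (eq_empty_iff_forall_notMem.1 claim2 x ⟨h2, h1⟩).elim
    · exact ⟨h1, h2⟩
  have hsep : SeparatedNhds (E₁ \ K) (E₂ \ K) := by
    refine separatedNhds_of_separated ?_ ?_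
    · refine disjoint_left.2 fun x hx hx2 => ?_
      have : x ∈ E₁ := hE₁c.closure_subset_iff.2 diff_subset hx
      exact hx2.2 (hE12 ⟨this, hx2.1⟩)
    · refine disjoint_left.2 fun x hx hx2 => ?_
      have : x ∈ E₂ := hE₂c.closure_subset_iff.2 diff_subset hx2
      exact hx.2 (hE12 ⟨hx.1, this⟩)
  obtain ⟨G, H, hG, hH, hE₁G, hE₂H, hGH⟩ := hsep
  refine ⟨(G ∪ H)ᶜ, ⟨(hG.union hH).isClosed_compl, G, H, hG, hH, hGH, ?_, ?_, compl_compl _⟩, ?_⟩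
  · intro x hx
    refine hE₁G ⟨Or.inl hx, fun hxK => ?_⟩
    exact (eq_empty_iff_forall_notMem.1 claim1 x ⟨hx, hxK.2⟩).elim
  · intro x hx
    refine hE₂H ⟨Or.inl hx, fun hxK => ?_⟩
    exact (eq_empty_iff_forall_notMem.1 claim2 x ⟨hx, hxK.1⟩).elim
  · rintro x ⟨hxM, hxS⟩
    refine ⟨hxS, fun hx => hxM ?_⟩
    rcases hx with hx | hx
    · refine Or.inl (hE₁G ⟨Or.inr (subset_closure hx), fun hxK => ?_⟩)
      exact (eq_empty_iff_forall_notMem.1 claim3 x ⟨hx, hxK.2⟩).elim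
    · refine Or.inr (hE₂H ⟨Or.inr (subset_closure hx), fun hxK => ?_⟩)
      exact (eq_empty_iff_forall_notMem.1 claim4 x ⟨hx, hxK.1⟩).elim

end Aux

/-- Let `X` be a compact metric space, `{(A i, B i) : i ∈ Γ}` an essential
family of pairs of disjoint closed subsets, `n ∈ Γ`, and let `S ⊆ X` meet every continuum
from `A n` to `B n`. For each `i ≠ n` let `U i` and `V i` be disjoint closed neighborhoods
of `A i` and `B i`. Then the family `{(U i ∩ S, V i ∩ S) : i ≠ n}` is essential in the
subspace `S`. -/
theorem essential_family_restricts_to_separating_set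
    {X : Type*} [MetricSpace X] [CompactSpace X] {Γ : Type*}
    (A B : Γ → Set X)
    (hA : ∀ i, IsClosed (A i)) (hB : ∀ i, IsClosed (B i))
    (hAB : ∀ i, Disjoint (A i) (B i))
    (hess : IsEssentialFamily A B)
    (n : Γ) (S : Set X)
    (hS : ∀ C : Set X, IsCompact C → IsConnected C →
      (C ∩ A n).Nonempty → (C ∩ B n).Nonempty → (S ∩ C).Nonempty)
    (U V : Γ → Set X)
    (hU : ∀ i, i ≠ n → IsClosed (U i)) (hV : ∀ i, i ≠ n → IsClosed (V i))
    (hUV : ∀ i, i ≠ n → Disjoint (U i) (V i))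
    (hAU : ∀ i, i ≠ n → U i ∈ nhdsSet (A i))
    (hBV : ∀ i, i ≠ n → V i ∈ nhdsSet (B i)) :
    IsEssentialFamily
      (fun i : {i : Γ // i ≠ n} => (Subtype.val ⁻¹' (U i.1) : Set S))
      (fun i : {i : Γ // i ≠ n} => (Subtype.val ⁻¹' (V i.1) : Set S)) := by
  classical
  intro L hL
  -- Step 1: for each i ≠ n, extend the separator `L i` (in `S`) to a separator `M i` (in `X`)
  have step1 : ∀ i : {i : Γ // i ≠ n}, ∃ M : Set X, IsSeparator (A i.1) (B i.1) M ∧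
      M ∩ S ⊆ Subtype.val '' (L i) := by
    intro i
    obtain ⟨hLc, 𝒰, 𝒱, h𝒰, h𝒱, h𝒰𝒱, hU𝒰, hV𝒱, hcompl⟩ := hL i
    obtain ⟨OU, hOU, hOU'⟩ := isOpen_induced_iff.1 h𝒰
    obtain ⟨OV, hOV, hOV'⟩ := isOpen_induced_iff.1 h𝒱
    have himU : (Subtype.val '' 𝒰 : Set X) = OU ∩ S := by
      rw [← hOU', Subtype.image_preimage_coe, inter_comm]
    have himV : (Subtype.val '' 𝒱 : Set X) = OV ∩ S := by
      rw [← hOV', Subtype.image_preimage_coe, inter_comm]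
    obtain ⟨M, hM, hMS⟩ := sep_ext (S := S) (hA i.1) (hB i.1) (hAB i.1) (hUV i.1 i.2)
      (subset_interior_iff_mem_nhdsSet.2 (hAU i.1 i.2))
      (subset_interior_iff_mem_nhdsSet.2 (hBV i.1 i.2))
      ⟨OU, hOU, himU.symm ▸ rfl⟩ ⟨OV, hOV, himV.symm ▸ rfl⟩
      ((Set.disjoint_image_iff Subtype.val_injective).2 h𝒰𝒱)
      (fun x hx => ⟨⟨x, hx.2⟩, hU𝒰 hx.1, rfl⟩)
      (fun x hx => ⟨⟨x, hx.2⟩, hV𝒱 hx.1, rfl⟩)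
    refine ⟨M, hM, fun x hx => ?_⟩
    obtain ⟨hxS, hxUV⟩ := hMS hx
    refine ⟨⟨x, hxS⟩, ?_, rfl⟩
    by_contra hxL
    have : (⟨x, hxS⟩ : S) ∈ 𝒰 ∪ 𝒱 := hcompl ▸ hxL
    rcases this with h | h
    · exact hxUV (Or.inl ⟨⟨x, hxS⟩, h, rfl⟩)
    · exact hxUV (Or.inr ⟨⟨x, hxS⟩, h, rfl⟩)
  choose M hMsep hMS using step1
  set K : Set X := ⋂ i, M i with hKdef
  have hKc : IsClosed K := isClosed_iInter fun i => (hMsep i).1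
  -- Step 2: there is a continuum from `A n` to `B n` inside `K`
  have step2 : ∃ C : Set X, IsCompact C ∧ IsConnected C ∧
      (C ∩ A n).Nonempty ∧ (C ∩ B n).Nonempty ∧ C ⊆ K := by
    by_contra hcon
    push_neg at hcon
    haveI : CompactSpace K := isCompact_iff_compactSpace.1 hKc.isCompact
    set A' : Set K := Subtype.val ⁻¹' (A n) with hA'
    set B' : Set K := Subtype.val ⁻¹' (B n) with hB'
    have hcc : ∀ x ∈ A', connectedComponent x ∩ B' = ∅ := by
      intro x hx
      by_contra h
      obtain ⟨y, hy1, hy2⟩ := nonempty_iff_ne_empty.2 h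
      set C : Set X := Subtype.val '' connectedComponent x with hC
      have hCK : C ⊆ K := by rintro _ ⟨z, _, rfl⟩; exact z.2
      have hCcomp : IsCompact C :=
        (isClosed_connectedComponent.isCompact).image continuous_subtype_val
      have hCconn : IsConnected C :=
        (isConnected_connectedComponent).image _ continuous_subtype_val.continuousOn
      exact hcon C hCcomp hCconn ⟨x.1, ⟨x, mem_connectedComponent, rfl⟩, hx⟩
        ⟨y.1, ⟨y, hy1, rfl⟩, hy2⟩ hCK
    obtain ⟨Z, hZ, hAZ, hZB⟩ := exists_clopen_sep
      ((hA n).preimage continuous_subtype_val) ((hB n).preimage continuous_subtype_val) hcc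
    set K₁ : Set X := Subtype.val '' Z with hK₁
    set K₂ : Set X := Subtype.val '' Zᶜ with hK₂
    have hK₁c : IsClosed K₁ :=
      ((hZ.isClosed.isCompact).image continuous_subtype_val).isClosed
    have hK₂c : IsClosed K₂ :=
      ((hZ.compl.isClosed.isCompact).image continuous_subtype_val).isClosed
    set F₁ : Set X := A n ∪ K₁ with hF₁
    set F₂ : Set X := B n ∪ K₂ with hF₂
    have hF₁c : IsClosed F₁ := (hA n).union hK₁c
    have hF₂c : IsClosed F₂ := (hB n).union hK₂c
    have hFd : Disjoint F₁ F₂ := by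
      rw [disjoint_left]
      rintro x (hx | hx) (hx2 | hx2)
      · exact hAB n |>.ne_of_mem hx hx2 rfl
      · obtain ⟨z, hz, rfl⟩ := hx2
        exact hz (hAZ hx)
      · obtain ⟨z, hz, rfl⟩ := hx
        exact eq_empty_iff_forall_notMem.1 hZB z ⟨hz, hx2⟩
      · obtain ⟨z, hz, rfl⟩ := hx
        obtain ⟨w, hw, hwz⟩ := hx2
        exact hw (Subtype.val_injective hwz ▸ hz)
    have hd1 : Disjoint (closure F₁) F₂ := by rw [hF₁c.closure_eq]; exact hFd
    have hd2 : Disjoint F₁ (closure F₂) := by rw [hF₂c.closure_eq]; exact hFd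
    obtain ⟨G, H, hG, hH, hF₁G, hF₂H, hGH⟩ := separatedNhds_of_separated hd1 hd2
    set L0 : Γ → Set X := fun i => if h : i = n then (G ∪ H)ᶜ else M ⟨i, h⟩ with hL0
    have hL0sep : ∀ i, IsSeparator (A i) (B i) (L0 i) := by
      intro i
      by_cases h : i = n
      · subst h
        simp only [hL0, dif_pos rfl]
        exact ⟨(hG.union hH).isClosed_compl, G, H, hG, hH, hGH,
          fun x hx => hF₁G (Or.inl hx), fun x hx => hF₂H (Or.inl hx), compl_compl _⟩
      · simpa only [hL0, dif_neg h] using hMsep ⟨i, h⟩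
    obtain ⟨x, hx⟩ := hess L0 hL0sep
    have hxn : x ∈ (G ∪ H)ᶜ := by
      have := mem_iInter.1 hx n
      simpa only [hL0, dif_pos rfl] using this
    have hxK : x ∈ K := by
      refine mem_iInter.2 fun i => ?_
      have := mem_iInter.1 hx i.1
      simpa only [hL0, dif_neg i.2] using this
    rcases Classical.em ((⟨x, hxK⟩ : K) ∈ Z) with hz | hz
    · exact hxn (Or.inl (hF₁G (Or.inr ⟨⟨x, hxK⟩, hz, rfl⟩)))
    · exact hxn (Or.inr (hF₂H (Or.inr ⟨⟨x, hxK⟩, hz, rfl⟩)))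
  obtain ⟨C, hCcomp, hCconn, hCA, hCB, hCK⟩ := step2
  obtain ⟨s, hsS, hsC⟩ := hS C hCcomp hCconn hCA hCB
  have hsL : ∀ i : {i : Γ // i ≠ n}, (⟨s, hsS⟩ : S) ∈ L i := by
    intro i
    have : s ∈ Subtype.val '' (L i) := hMS i ⟨mem_iInter.1 (hCK hsC) i, hsS⟩
    obtain ⟨y, hy, hys⟩ := this
    rwa [show (⟨s, hsS⟩ : S) = y from Subtype.val_injective hys.symm]
  exact ⟨⟨s, hsS⟩, mem_iInter.2 hsL⟩
end

section
/- In the Hilbert cube Q = [-1,1]^ℕ, the countably infinite family {(W_n^-, W_n^+) : n ∈ ℕ} of pairs of opposite faces is essential; in particular, the Hilbert cube is strongly infinite dimensional. -/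
open Set

/-- A space is strongly infinite dimensional if it admits a countably infinite
essential family of pairs of disjoint closed subsets. -/
def StronglyInfiniteDimensional (X : Type*) [TopologicalSpace X] : Prop :=
  ∃ A B : ℕ → Set X,
    (∀ n, IsClosed (A n) ∧ IsClosed (B n) ∧ Disjoint (A n) (B n)) ∧
    IsEssentialFamily A B

/-- The Hilbert cube `Q = [-1,1]^ℕ`. -/
abbrev HilbertCube : Type := ℕ → Set.Icc (-1 : ℝ) 1

/-- The negative face `W_i^- = {x ∈ Q : x_i = -1}`. -/
def negFace (i : ℕ) : Set HilbertCube := {x | (x i : ℝ) = -1}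

/-- The positive face `W_i^+ = {x ∈ Q : x_i = 1}`. -/
def posFace (i : ℕ) : Set HilbertCube := {x | (x i : ℝ) = 1}

/-! Let `L i` be separators, `(L i)ᶜ = U i ∪ V i` with `W_i^- ⊆ U i` and `W_i^+ ⊆ V i`. Label each
point of the grid `{0, …, m+1}^(m+1)`, placed in the first `m + 1` coordinates of `Q`, by the first
`i` for which it lies outside `V i`. As `W_i^-` misses `V i` and `W_i^+ ⊆ V i`, this is a Sperner
labelling of the Kuhn triangulation of the grid, so some Kuhn simplex carries every label
`0, …, m+1`. (Sperner's lemma is proved by induction on the dimension: modulo 2, fully labelled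
simplices are counted by their doors, the facets carrying all labels but the top one; doors pair up
across adjacent simplices, except those on the face `y_last = 0`, which are the fully labelled
simplices of that face.) The vertices labelled `i` and `i + 1` lie outside and inside `V i`. As the
mesh `2 / (m + 1)` tends to `0`, a limit point of these simplices lies in `frontier (V i) ⊆ L i`
for every `i`. -/

open Finset Equiv Filter Topology

lemma even_card_of_involution {α : Type*} (s : Finset α) (g : α → α) (hmem : ∀ a ∈ s, g a ∈ s)
    (hne : ∀ a ∈ s, g a ≠ a) (hinv : ∀ a ∈ s, g (g a) = a) : Even #s := by
  rw [← ZMod.natCast_eq_zero_iff_even, card_eq_sum_ones, Nat.cast_sum]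
  exact sum_involution (fun a _ => g a) (fun _ _ => by decide) (fun a ha _ => hne a ha) hmem hinv

lemma sub_single_add_single {ι : Type*} [DecidableEq ι] {x : ι → ℕ} {c : ι} (hc : x c ≠ 0) :
    x - Pi.single c 1 + Pi.single c 1 = x := by
  funext i
  rcases eq_or_ne i c with rfl | hi
  · simp; omega
  · simp [Pi.single_eq_of_ne hi]

section DoorCount

variable {M : ℕ} {f : ℕ → ℕ}

lemma filter_forall_exists_ne_eq_singleton (hf : ∀ j ≤ M, f j ≤ M)
    (hfull : ∀ m ≤ M, ∃ j ≤ M, f j = m) {j₀ : ℕ} (hj₀ : j₀ ≤ M) (hfj₀ : f j₀ = M) :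
    {j ∈ Finset.Iic M | ∀ m < M, ∃ j' ≤ M, j' ≠ j ∧ f j' = m} = {j₀} := by
  have hinj : Set.InjOn f (Finset.Iic M) := injOn_of_surjOn_of_card_le f
    (fun j hj => by simp_all) (fun m hm => by simpa using hfull m (by simpa using hm)) le_rfl
  ext j
  simp only [mem_filter, Finset.mem_Iic, Finset.mem_singleton]
  constructor
  · rintro ⟨hj, hdoor⟩
    by_contra hne
    have hfj : f j < M :=
      (hf j hj).lt_of_ne fun h => hne (hinj (by simpa) (by simpa) (h.trans hfj₀.symm))
    obtain ⟨j', hj', hj'j, hfj'⟩ := hdoor (f j) hfj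
    exact hj'j (hinj (by simpa) (by simpa) hfj')
  · rintro rfl
    refine ⟨hj₀, fun m hm => ?_⟩
    obtain ⟨j', hj', rfl⟩ := hfull m hm.le
    exact ⟨j', hj', by rintro rfl; omega, rfl⟩

lemma exists_filter_forall_exists_ne_eq_pair (hf : ∀ j ≤ M, f j ≤ M)
    (hcov : ∀ m < M, ∃ j ≤ M, f j = m) (hM : ∀ j ≤ M, f j ≠ M) :
    ∃ a b, a ≠ b ∧ {j ∈ Finset.Iic M | ∀ m < M, ∃ j' ≤ M, j' ≠ j ∧ f j' = m} = {a, b} := by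
  have hlt : ∀ j ≤ M, f j < M := fun j hj => (hf j hj).lt_of_ne (hM j hj)
  obtain ⟨a, ha, b, hb, hab, hfab⟩ := exists_ne_map_eq_of_card_lt_of_maps_to
    (s := Finset.Iic M) (t := Finset.Iio M) (f := f) (by simp)
    (fun j hj => by simpa using hlt j (by simpa using hj))
  rw [Finset.mem_Iic] at ha hb
  -- `f` maps the `M` indices other than `a` onto `[0, M)`
  have hinj : Set.InjOn f ((Finset.Iic M).erase a) :=
    injOn_of_surjOn_of_card_le (t := Finset.Iio M) f (fun j hj => by simp_all)
      (fun m hm => by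
        obtain ⟨j, hj, rfl⟩ := hcov m (by simpa using hm)
        rcases eq_or_ne j a with rfl | hja
        · exact ⟨b, by simp [hab.symm, hb], hfab.symm⟩
        · exact ⟨j, by simp [hja, hj], rfl⟩)
      (by simp [card_erase_of_mem (Finset.mem_Iic.2 ha)])
  refine ⟨a, b, hab, ?_⟩
  ext j
  simp only [mem_filter, Finset.mem_Iic, Finset.mem_insert, Finset.mem_singleton]
  constructor
  · rintro ⟨hj, hdoor⟩
    by_contra! hne
    obtain ⟨j', hj', hj'j, hfj'⟩ := hdoor (f j) (hlt j hj)
    rcases eq_or_ne j' a with rfl | hj'a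
    · exact hne.2 (hinj (by simp [*]) (by simp [hb, hab.symm]) (hfj'.symm.trans hfab))
    · exact hj'j (hinj (by simp [*]) (by simp [*]) hfj')
  · intro hj
    refine ⟨by omega, fun m hm => ?_⟩
    obtain ⟨j', hj', rfl⟩ := hcov m hm
    by_cases hj'j : j' = j
    · subst hj'j
      rcases hj with rfl | rfl
      · exact ⟨b, hb, hab.symm, hfab.symm⟩
      · exact ⟨a, ha, hab, hfab⟩
    · exact ⟨j', hj', hj'j, rfl⟩

/-- The door count of a single simplex whose vertices carry the labels `f 0, …, f M`. -/
theorem card_filter_forall_exists_ne (hf : ∀ j ≤ M, f j ≤ M) :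
    (#{j ∈ Finset.Iic M | ∀ m < M, ∃ j' ≤ M, j' ≠ j ∧ f j' = m} : ZMod 2) =
      if ∀ m ≤ M, ∃ j ≤ M, f j = m then 1 else 0 := by
  by_cases hcov : ∀ m < M, ∃ j ≤ M, f j = m
  · by_cases hfull : ∀ m ≤ M, ∃ j ≤ M, f j = m
    · obtain ⟨j₀, hj₀, hfj₀⟩ := hfull M le_rfl
      rw [if_pos hfull, filter_forall_exists_ne_eq_singleton hf hfull hj₀ hfj₀,
        Finset.card_singleton, Nat.cast_one]
    · have hM : ∀ j ≤ M, f j ≠ M := fun j hj hfj =>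
        hfull fun m hm => hm.eq_or_lt.elim (fun h => ⟨j, hj, hfj.trans h.symm⟩) (hcov m)
      obtain ⟨a, b, hab, hdoors⟩ := exists_filter_forall_exists_ne_eq_pair hf hcov hM
      rw [if_neg hfull, hdoors, card_pair hab]
      rfl
  · have hnone : {j ∈ Finset.Iic M | ∀ m < M, ∃ j' ≤ M, j' ≠ j ∧ f j' = m} = ∅ :=
      filter_eq_empty_iff.2 fun j _ hdoor => hcov fun m hm =>
        let ⟨j', hj', _, hfj'⟩ := hdoor m hm; ⟨j', hj', hfj'⟩
    rw [if_neg fun hfull => hcov fun m hm => hfull m hm.le, hnone, Finset.card_empty,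
      Nat.cast_zero]

end DoorCount

namespace Kuhn

open scoped Classical

variable {D k n : ℕ}

/-- The vertices `x = vertex x w 0, …, vertex x w D` of the Kuhn simplex with corner `x`:
each step raises one coordinate by one, coordinate `i` at step `w i`. -/
def vertex (x : Fin D → ℕ) (w : Perm (Fin D)) (j : ℕ) (i : Fin D) : ℕ :=
  x i + if (w i : ℕ) < j then 1 else 0

@[simp] lemma vertex_zero (x : Fin D → ℕ) (w : Perm (Fin D)) : vertex x w 0 = x := by
  funext i; simp [vertex]

lemma vertex_apply_le (x : Fin D → ℕ) (w : Perm (Fin D)) (j : ℕ) (i : Fin D) :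
    x i ≤ vertex x w j i ∧ vertex x w j i ≤ x i + 1 := by
  unfold vertex; split <;> omega

lemma vertex_trans_swap {a b : Fin D} (hab : (a : ℕ) + 1 = b) (x : Fin D → ℕ) (w : Perm (Fin D))
    {j : ℕ} (hj : j ≠ b) : vertex x (w.trans (swap a b)) j = vertex x w j := by
  funext i
  simp only [vertex, trans_apply, swap_apply_def]
  split_ifs <;> simp_all <;> omega

lemma vertex_rotate (x : Fin (n + 1) → ℕ) (w : Perm (Fin (n + 1))) {j : ℕ} (hj : j ≤ n) :
    vertex (x + Pi.single (w.symm 0) 1) (w.trans (finRotate (n + 1)).symm) j =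
      vertex x w (j + 1) := by
  funext i
  simp only [vertex, trans_apply, Pi.add_apply]
  rcases eq_or_ne i (w.symm 0) with rfl | hi
  · have hlast : (finRotate (n + 1)).symm 0 = Fin.last n :=
      (symm_apply_eq _).2 (finRotate_last (n := n)).symm
    simp [hlast]
    omega
  · have hwi : w i ≠ 0 := fun h => hi ((eq_symm_apply w).2 h)
    have hpos : 0 < (w i : ℕ) := Fin.pos_iff_ne_zero.2 hwi
    simp only [Pi.single_eq_of_ne hi, coe_finRotate_symm_of_ne_zero hwi]
    split_ifs <;> omega

def permExtend (u : Perm (Fin n)) : Perm (Fin (n + 1)) where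
  toFun := Fin.lastCases (Fin.last n) fun i => (u i).castSucc
  invFun := Fin.lastCases (Fin.last n) fun i => (u.symm i).castSucc
  left_inv i := by induction i using Fin.lastCases <;> simp
  right_inv i := by induction i using Fin.lastCases <;> simp

@[simp] lemma permExtend_last (u : Perm (Fin n)) : permExtend u (Fin.last n) = Fin.last n := by
  simp [permExtend]

@[simp] lemma permExtend_castSucc (u : Perm (Fin n)) (i : Fin n) :
    permExtend u i.castSucc = (u i).castSucc := by
  simp [permExtend]

lemma permExtend_injective : Function.Injective (permExtend (n := n)) := fun u v huv =>
  Equiv.ext fun i => Fin.castSucc_injective _ (by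
    rw [← permExtend_castSucc, ← permExtend_castSucc, huv])

lemma exists_permExtend_eq {w : Perm (Fin (n + 1))} (hw : w (Fin.last n) = Fin.last n) :
    ∃ u, permExtend u = w := by
  have hw' : w.symm (Fin.last n) = Fin.last n := (symm_apply_eq w).2 hw.symm
  have hne : ∀ (e : Perm (Fin (n + 1))), e (Fin.last n) = Fin.last n →
      ∀ i : Fin n, e i.castSucc ≠ Fin.last n := fun e he i h =>
    (Fin.castSucc_lt_last i).ne (e.injective (h.trans he.symm))
  refine ⟨⟨fun i => (w i.castSucc).castPred (hne w hw i),
    fun i => (w.symm i.castSucc).castPred (hne w.symm hw' i), fun i => ?_, fun i => ?_⟩,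
    Equiv.ext fun i => ?_⟩
  · simp
  · simp
  · induction i using Fin.lastCases <;> simp [permExtend, hw]

lemma vertex_snoc (y : Fin n → ℕ) (u : Perm (Fin n)) {j : ℕ} (hj : j ≤ n) :
    vertex (Fin.snoc y 0) (permExtend u) j = Fin.snoc (vertex y u j) 0 := by
  funext i
  induction i using Fin.lastCases with
  | last => simp [vertex]; omega
  | cast i => simp [vertex]

abbrev Simplex (D : ℕ) : Type := (Fin D → ℕ) × Perm (Fin D)

/-- The Kuhn simplices triangulating the grid `{0, …, k}^D`. -/
def cells (D k : ℕ) : Finset (Simplex D) :=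
  Fintype.piFinset (fun _ => range k) ×ˢ Finset.univ

lemma mem_cells {s : Simplex D} : s ∈ cells D k ↔ ∀ i, s.1 i < k := by
  simp [cells]

def IsFull (ℓ : (Fin D → ℕ) → ℕ) (s : Simplex D) : Prop :=
  ∀ m ≤ D, ∃ j ≤ D, ℓ (vertex s.1 s.2 j) = m

/-- The facet of the simplex `a.1` opposite its vertex `a.2` carries all labels in `[0, D)`. -/
def IsDoor (ℓ : (Fin D → ℕ) → ℕ) (a : Simplex D × ℕ) : Prop :=
  ∀ m < D, ∃ j ≤ D, j ≠ a.2 ∧ ℓ (vertex a.1.1 a.1.2 j) = m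

variable {ℓ : (Fin D → ℕ) → ℕ}

lemma isDoor_congr {x x' : Fin D → ℕ} {w w' : Perm (Fin D)} {j : ℕ}
    (h : ∀ j' ≠ j, vertex x w j' = vertex x' w' j') :
    IsDoor ℓ ((x, w), j) ↔ IsDoor ℓ ((x', w'), j) :=
  forall₂_congr fun _ _ => exists_congr fun j' => and_congr_right fun _ =>
    and_congr_right fun hj' => by rw [h j' hj']

lemma isDoor_rotate_iff {ℓ : (Fin (n + 1) → ℕ) → ℕ} (x : Fin (n + 1) → ℕ)
    (w : Perm (Fin (n + 1))) :
    IsDoor ℓ ((x + Pi.single (w.symm 0) 1, w.trans (finRotate (n + 1)).symm), n + 1) ↔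
      IsDoor ℓ ((x, w), 0) := by
  refine forall₂_congr fun m _ => ⟨?_, ?_⟩
  · rintro ⟨j, hj, hjn, hℓ⟩
    exact ⟨j + 1, by omega, by omega, by rwa [← vertex_rotate x w (by omega)]⟩
  · rintro ⟨j, hj, hj0, hℓ⟩
    obtain ⟨j, rfl⟩ := Nat.exists_eq_add_one_of_ne_zero hj0
    exact ⟨j, by omega, by omega, by rwa [vertex_rotate x w (by omega)]⟩

/-- A door opposite the corner is not on the face `y c = k` containing the other vertices. -/
lemma add_one_ne_of_isDoor_zero {ℓ : (Fin (n + 1) → ℕ) → ℕ}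
    (htop : ∀ y (i : Fin (n + 1)), y i = k → ℓ y ≠ i) {x : Fin (n + 1) → ℕ}
    {w : Perm (Fin (n + 1))} (hd : IsDoor ℓ ((x, w), 0)) : x (w.symm 0) + 1 ≠ k := by
  intro hk
  obtain ⟨j, -, hj, hℓ⟩ := hd (w.symm 0) (w.symm 0).isLt
  refine htop _ _ ?_ hℓ
  simp only [vertex, apply_symm_apply, Fin.val_zero]
  rw [if_pos (Nat.pos_of_ne_zero hj), hk]

/-- A door opposite the top vertex on a face `y c = 0` lies on the last such face. -/
lemma eq_last_of_isDoor_last {ℓ : (Fin (n + 1) → ℕ) → ℕ}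
    (h0 : ∀ y (i : Fin (n + 1)), y i = 0 → ℓ y ≤ i) {x : Fin (n + 1) → ℕ}
    {w : Perm (Fin (n + 1))} (hd : IsDoor ℓ ((x, w), n + 1)) (hx : x (w.symm (Fin.last n)) = 0) :
    w.symm (Fin.last n) = Fin.last n := by
  by_contra hne
  have hlt : (w.symm (Fin.last n) : ℕ) < n := Fin.val_lt_last hne
  obtain ⟨j, hj, hjn, hℓ⟩ := hd n (by omega)
  have := h0 (vertex x w j) (w.symm (Fin.last n)) (by simp [vertex, hx]; omega)
  simp only at hℓ
  omega

noncomputable def doors (ℓ : (Fin D → ℕ) → ℕ) (k : ℕ) : Finset (Simplex D × ℕ) :=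
  {a ∈ cells D k ×ˢ Finset.Iic D | IsDoor ℓ a}

lemma mem_doors {a : Simplex D × ℕ} :
    a ∈ doors ℓ k ↔ (∀ i, a.1.1 i < k) ∧ a.2 ≤ D ∧ IsDoor ℓ a := by
  simp [doors, mem_cells, and_assoc]

/-- The facet opposite the top vertex lies in the face `y (last n) = 0`. -/
def IsBottomFacet (a : Simplex (n + 1) × ℕ) : Prop :=
  a.2 = n + 1 ∧ a.1.1 (Fin.last n) = 0 ∧ a.1.2 (Fin.last n) = Fin.last n

lemma ne_zero_of_isDoor_last {ℓ : (Fin (n + 1) → ℕ) → ℕ}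
    (h0 : ∀ y (i : Fin (n + 1)), y i = 0 → ℓ y ≤ i) {x : Fin (n + 1) → ℕ}
    {w : Perm (Fin (n + 1))} (hd : IsDoor ℓ ((x, w), n + 1))
    (hb : ¬ IsBottomFacet ((x, w), n + 1)) : x (w.symm (Fin.last n)) ≠ 0 := by
  intro hx
  have hlast := eq_last_of_isDoor_last h0 hd hx
  exact hb ⟨rfl, hlast ▸ hx, by rw [← hlast, apply_symm_apply, hlast]⟩

/-- Crossing a door: the other Kuhn simplex containing the facet opposite vertex `j`. -/
def pivot : Simplex (n + 1) × ℕ → Simplex (n + 1) × ℕ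
  | ((x, w), j) =>
    if j = 0 then ((x + Pi.single (w.symm 0) 1, w.trans (finRotate (n + 1)).symm), n + 1)
    else if h : j < n + 1 then ((x, w.trans (swap ⟨j - 1, by omega⟩ ⟨j, h⟩)), j)
    else ((x - Pi.single (w.symm (Fin.last n)) 1, w.trans (finRotate (n + 1))), 0)

lemma pivot_zero (x : Fin (n + 1) → ℕ) (w : Perm (Fin (n + 1))) :
    pivot ((x, w), 0) = ((x + Pi.single (w.symm 0) 1, w.trans (finRotate (n + 1)).symm), n + 1) :=
  rfl

lemma pivot_last (x : Fin (n + 1) → ℕ) (w : Perm (Fin (n + 1))) :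
    pivot ((x, w), n + 1) =
      ((x - Pi.single (w.symm (Fin.last n)) 1, w.trans (finRotate (n + 1))), 0) := by
  simp [pivot]

lemma pivot_of_pos_of_lt (x : Fin (n + 1) → ℕ) (w : Perm (Fin (n + 1))) {j : ℕ} (hj0 : 0 < j)
    (hj : j < n + 1) :
    pivot ((x, w), j) = ((x, w.trans (swap ⟨j - 1, by omega⟩ ⟨j, hj⟩)), j) := by
  simp [pivot, hj0.ne', hj]

lemma pivot_mem_doors {ℓ : (Fin (n + 1) → ℕ) → ℕ}
    (h0 : ∀ y (i : Fin (n + 1)), y i = 0 → ℓ y ≤ i)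
    (htop : ∀ y (i : Fin (n + 1)), y i = k → ℓ y ≠ i)
    {a : Simplex (n + 1) × ℕ} (ha : a ∈ doors ℓ k)
    (hb : ¬ IsBottomFacet a) :
    pivot a ∈ doors ℓ k ∧ ¬ IsBottomFacet (pivot a) ∧ pivot (pivot a) = a := by
  obtain ⟨⟨x, w⟩, j⟩ := a
  obtain ⟨hx, hj, hd⟩ := mem_doors.1 ha
  simp only at hx hj
  have hlast : (finRotate (n + 1)).symm 0 = Fin.last n :=
    (symm_apply_eq _).2 (finRotate_last (n := n)).symm
  rcases Nat.eq_zero_or_pos j with rfl | hj0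
  · have hc := add_one_ne_of_isDoor_zero htop hd
    rw [pivot_zero, pivot_last]
    refine ⟨mem_doors.2 ⟨fun i => ?_, le_rfl, (isDoor_rotate_iff x w).2 hd⟩, ?_, ?_⟩
    · rcases eq_or_ne i (w.symm 0) with rfl | hi
      · have := hx (w.symm 0); simp; omega
      · simpa [Pi.single_eq_of_ne hi] using hx i
    · rintro ⟨-, hxl, hwl⟩
      simp only [trans_apply, symm_apply_eq, finRotate_last] at hwl
      simp [(symm_apply_eq w).2 hwl.symm] at hxl
    · simp [trans_assoc]
  rcases (Nat.lt_or_ge j (n + 1)) with hjn | hjn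
  · have hab : ((⟨j - 1, by omega⟩ : Fin (n + 1)) : ℕ) + 1 = (⟨j, hjn⟩ : Fin (n + 1)) := by
      simp only; omega
    have hne : j ≠ n + 1 := by omega
    rw [pivot_of_pos_of_lt x w hj0 hjn, pivot_of_pos_of_lt x _ hj0 hjn]
    refine ⟨mem_doors.2 ⟨hx, hj, ?_⟩, fun h => hne h.1, ?_⟩
    · exact (isDoor_congr fun j' hj' => vertex_trans_swap hab x w hj').2 hd
    · ext <;> simp
  · obtain rfl : j = n + 1 := by omega
    have hc := ne_zero_of_isDoor_last h0 hd hb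
    have hsymm : (w.trans (finRotate (n + 1))).symm 0 = w.symm (Fin.last n) := by
      simp [hlast]
    have hx' := sub_single_add_single hc
    rw [pivot_last, pivot_zero, hsymm, hx']
    refine ⟨mem_doors.2 ⟨fun i => (Nat.sub_le _ _).trans_lt (hx i), Nat.zero_le _, ?_⟩,
      fun h => absurd h.1 (by omega), by simp [trans_assoc]⟩
    rw [← isDoor_rotate_iff, hsymm, hx']
    simpa [trans_assoc] using hd

lemma pivot_ne {a : Simplex (n + 1) × ℕ} : pivot a ≠ a := by
  obtain ⟨⟨x, w⟩, j⟩ := a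
  rcases Nat.eq_zero_or_pos j with rfl | hj0
  · simp [pivot_zero]
  rcases (Nat.lt_or_ge j (n + 1)) with hjn | hjn
  · rw [pivot_of_pos_of_lt x w hj0 hjn]
    intro h
    have := congrArg (fun a => a.1.2 (w.symm ⟨j - 1, by omega⟩)) h
    simp [Fin.ext_iff] at this
    omega
  · simp [pivot, hj0.ne', hjn.not_gt]
    omega

lemma isDoor_snoc_iff {ℓ : (Fin (n + 1) → ℕ) → ℕ} (y : Fin n → ℕ) (u : Perm (Fin n)) :
    IsDoor ℓ ((Fin.snoc y 0, permExtend u), n + 1) ↔ IsFull (fun z => ℓ (Fin.snoc z 0)) (y, u) := by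
  simp only [IsDoor, IsFull, Nat.lt_add_one_iff]
  refine forall₂_congr fun m _ => ⟨?_, ?_⟩
  · rintro ⟨j, hj, hjn, hℓ⟩
    exact ⟨j, by omega, by rwa [← vertex_snoc y u (by omega)]⟩
  · rintro ⟨j, hj, hℓ⟩
    exact ⟨j, by omega, by omega, by rwa [vertex_snoc y u hj]⟩

lemma card_filter_isBottomFacet {ℓ : (Fin (n + 1) → ℕ) → ℕ} (hk : 0 < k) :
    #{a ∈ doors ℓ k | IsBottomFacet a} =
      #{s ∈ cells n k | IsFull (fun z => ℓ (Fin.snoc z 0)) s} := by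
  symm
  refine card_nbij (fun s => ((Fin.snoc s.1 0, permExtend s.2), n + 1)) ?_ ?_ ?_
  · rintro ⟨y, u⟩ hs
    simp only [Finset.mem_coe, mem_filter, mem_cells] at hs ⊢
    refine ⟨mem_doors.2 ⟨fun i => ?_, le_rfl, (isDoor_snoc_iff y u).2 hs.2⟩, rfl, by simp, by simp⟩
    induction i using Fin.lastCases <;> simp [hk, hs.1]
  · rintro ⟨y, u⟩ - ⟨y', u'⟩ - h
    simp only [Prod.mk.injEq, Fin.snoc_injective2.eq_iff, permExtend_injective.eq_iff] at h
    simp [h]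
  · intro a ha
    rw [Finset.mem_coe, mem_filter] at ha
    obtain ⟨⟨x, w⟩, j⟩ := a
    obtain ⟨ha, rfl, hx, hw⟩ := ha
    obtain ⟨hx', -, hd⟩ := mem_doors.1 ha
    obtain ⟨u, rfl⟩ := exists_permExtend_eq hw
    have hxs : Fin.snoc (Fin.init x) 0 = x := by rw [← hx, Fin.snoc_init_self]
    refine ⟨(Fin.init x, u), ?_, by simp [hxs]⟩
    simp only [Finset.mem_coe, mem_filter, mem_cells]
    rw [← hxs] at hd
    exact ⟨fun i => hx' _, (isDoor_snoc_iff _ u).1 hd⟩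

lemma even_card_filter_not_isBottomFacet {ℓ : (Fin (n + 1) → ℕ) → ℕ}
    (h0 : ∀ y (i : Fin (n + 1)), y i = 0 → ℓ y ≤ i)
    (htop : ∀ y (i : Fin (n + 1)), y i = k → ℓ y ≠ i) :
    Even #{a ∈ doors ℓ k | ¬ IsBottomFacet a} := by
  refine even_card_of_involution _ pivot (fun a ha => ?_) (fun _ _ => pivot_ne) (fun a ha => ?_)
  · rw [mem_filter] at ha ⊢
    exact (pivot_mem_doors h0 htop ha.1 ha.2).imp_right And.left
  · rw [mem_filter] at ha
    exact (pivot_mem_doors h0 htop ha.1 ha.2).2.2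

lemma natCast_card_filter_isFull {ℓ : (Fin D → ℕ) → ℕ} (hle : ∀ y, ℓ y ≤ D) :
    (#{s ∈ cells D k | IsFull ℓ s} : ZMod 2) = #(doors ℓ k) := by
  rw [doors, card_filter, card_filter, sum_product]
  push_cast
  refine sum_congr rfl fun s _ => ?_
  have := card_filter_forall_exists_ne (M := D) (f := fun j => ℓ (vertex s.1 s.2 j))
    (fun j _ => hle _)
  rw [card_filter] at this
  push_cast at this
  convert this.symm using 3 <;> rfl

theorem natCast_card_filter_isFull_eq_one (hk : 0 < k) :
    ∀ {D : ℕ} (ℓ : (Fin D → ℕ) → ℕ), (∀ y (i : Fin D), y i = 0 → ℓ y ≤ i) →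
      (∀ y (i : Fin D), y i = k → ℓ y ≠ i) → (∀ y, ℓ y ≤ D) →
      (#{s ∈ cells D k | IsFull ℓ s} : ZMod 2) = 1
  | 0, ℓ, _, _, hle => by
    have hfull : ∀ s ∈ cells 0 k, IsFull ℓ s := fun s _ m hm =>
      ⟨0, le_rfl, by have := hle (vertex s.1 s.2 0); omega⟩
    rw [filter_true_of_mem hfull]
    simp [cells]
  | n + 1, ℓ, h0, htop, hle => by
    have h0' : ∀ y (i : Fin n), y i = 0 → ℓ (Fin.snoc y 0) ≤ i := fun y i hy => by
      simpa using h0 (Fin.snoc y 0) i.castSucc (by simpa using hy)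
    have htop' : ∀ y (i : Fin n), y i = k → ℓ (Fin.snoc y 0) ≠ i := fun y i hy => by
      simpa using htop (Fin.snoc y 0) i.castSucc (by simpa using hy)
    have hle' : ∀ y : Fin n → ℕ, ℓ (Fin.snoc y 0) ≤ n := fun y => by
      simpa using h0 (Fin.snoc y 0) (Fin.last n) (by simp)
    rw [natCast_card_filter_isFull hle, ← card_filter_add_card_filter_not IsBottomFacet,
      Nat.cast_add, card_filter_isBottomFacet hk,
      natCast_card_filter_isFull_eq_one hk _ h0' htop' hle',
      (ZMod.natCast_eq_zero_iff_even).2 (even_card_filter_not_isBottomFacet h0 htop), add_zero]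

/-- Sperner's lemma for the Kuhn triangulation of the grid `{0, …, k}^D`. -/
theorem exists_isFull {D : ℕ} (hk : 0 < k) (ℓ : (Fin D → ℕ) → ℕ)
    (h0 : ∀ y (i : Fin D), y i = 0 → ℓ y ≤ i) (htop : ∀ y (i : Fin D), y i = k → ℓ y ≠ i)
    (hle : ∀ y, ℓ y ≤ D) : ∃ s ∈ cells D k, IsFull ℓ s := by
  by_contra! h
  have := natCast_card_filter_isFull_eq_one hk ℓ h0 htop hle
  rw [filter_false_of_mem h, Finset.card_empty, Nat.cast_zero] at this
  exact zero_ne_one this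

end Kuhn

lemma frontier_subset_of_compl_eq_union {X : Type*} [TopologicalSpace X] {U V L : Set X}
    (hU : IsOpen U) (hV : IsOpen V) (hUV : Disjoint U V) (hL : Lᶜ = U ∪ V) : frontier V ⊆ L := by
  intro p hp
  rw [hV.frontier_eq] at hp
  by_contra hpL
  rcases hL ▸ (show p ∈ Lᶜ from hpL) with hpU | hpV
  · obtain ⟨q, hqU, hqV⟩ := mem_closure_iff.1 hp.1 U hU hpU
    exact disjoint_left.1 hUV hqU hqV
  · exact hp.2 hpV

lemma tendsto_prod_top_of_dist_le {ι κ : Type*} {X : ι → Type*} [∀ i, PseudoMetricSpace (X i)]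
    {f : ℕ → ∀ i, X i} {g : ℕ → κ → ∀ i, X i} {p : ∀ i, X i} {ε : ℕ → ℝ}
    (hf : Tendsto f atTop (𝓝 p)) (hε : Tendsto ε atTop (𝓝 0))
    (hg : ∀ n j i, dist (f n i) (g n j i) ≤ ε n) :
    Tendsto (fun a : ℕ × κ => g a.1 a.2) (atTop ×ˢ ⊤) (𝓝 p) := by
  refine (hf.comp tendsto_fst).congr_uniformity ?_
  simp only [Pi.uniformity, tendsto_iInf, tendsto_comap_iff, Metric.uniformity_eq_comap_nhds_zero]
  exact fun i => squeeze_zero (fun _ => dist_nonneg) (fun a => hg a.1 a.2 i) (hε.comp tendsto_fst)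

section GridPoint

variable {D k : ℕ}

noncomputable def gridPoint (k : ℕ) (y : Fin D → ℕ) : HilbertCube := fun i =>
  projIcc (-1) 1 (by norm_num) (if h : i < D then -1 + 2 * y ⟨i, h⟩ / k else 0)

lemma gridPoint_mem_negFace {y : Fin D → ℕ} {i : Fin D} (hy : y i = 0) :
    gridPoint k y ∈ negFace i := by
  simp [gridPoint, negFace, hy]

lemma gridPoint_mem_posFace (hk : 0 < k) {y : Fin D → ℕ} {i : Fin D} (hy : y i = k) :
    gridPoint k y ∈ posFace i := by
  have : -1 + 2 * (k : ℝ) / k = 1 := by field_simp; norm_num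
  simp [gridPoint, posFace, hy, this]

lemma dist_gridPoint_vertex_le (x : Fin D → ℕ) (w : Equiv.Perm (Fin D)) (j i : ℕ) :
    dist (gridPoint k x i) (gridPoint k (Kuhn.vertex x w j) i) ≤ 2 / k := by
  rw [Subtype.dist_eq, Real.dist_eq]
  refine (abs_projIcc_sub_projIcc _).trans ?_
  split_ifs with h
  · obtain ⟨h₁, h₂⟩ := Kuhn.vertex_apply_le x w j ⟨i, h⟩
    rw [show -1 + 2 * (x ⟨i, h⟩ : ℝ) / k - (-1 + 2 * (Kuhn.vertex x w j ⟨i, h⟩ : ℝ) / k) =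
      2 * ((x ⟨i, h⟩ : ℝ) - Kuhn.vertex x w j ⟨i, h⟩) / k by ring, abs_div, abs_mul, abs_two,
      Nat.abs_cast]
    gcongr
    rw [abs_sub_comm, abs_of_nonneg (by norm_num; exact_mod_cast h₁)]
    linarith [show (Kuhn.vertex x w j ⟨i, h⟩ : ℝ) ≤ x ⟨i, h⟩ + 1 by exact_mod_cast h₂]
  · simp only [sub_self, abs_zero]
    positivity

end GridPoint

section FirstNotMem

open scoped Classical

variable {X : Type*} {V : ℕ → Set X} {D i : ℕ} {p : X}

noncomputable def firstNotMem (V : ℕ → Set X) (D : ℕ) (p : X) : ℕ :=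
  Nat.find (⟨D, Or.inl le_rfl⟩ : ∃ i, D ≤ i ∨ p ∉ V i)

lemma firstNotMem_le : firstNotMem V D p ≤ D :=
  Nat.find_min' _ (Or.inl le_rfl)

lemma firstNotMem_le_of_notMem (h : p ∉ V i) : firstNotMem V D p ≤ i :=
  Nat.find_min' _ (Or.inr h)

lemma notMem_of_firstNotMem_eq (h : firstNotMem V D p = i) (hi : i < D) : p ∉ V i := by
  have : D ≤ firstNotMem V D p ∨ p ∉ V (firstNotMem V D p) :=
    Nat.find_spec (⟨D, Or.inl le_rfl⟩ : ∃ i, D ≤ i ∨ p ∉ V i)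
  rw [h] at this
  exact this.resolve_left (by omega)

lemma mem_of_lt_firstNotMem (h : i < firstNotMem V D p) : p ∈ V i :=
  not_not.1 (not_or.1 (Nat.find_min _ h)).2

end FirstNotMem

lemma exists_isFull_firstNotMem_gridPoint {D k : ℕ} {V : ℕ → Set HilbertCube}
    (hneg : ∀ i, Disjoint (negFace i) (V i)) (hpos : ∀ i, posFace i ⊆ V i) (hk : 0 < k) :
    ∃ s ∈ Kuhn.cells D k, Kuhn.IsFull (fun y => firstNotMem V D (gridPoint k y)) s :=
  Kuhn.exists_isFull hk _
    (fun _ i hy => firstNotMem_le_of_notMem (disjoint_left.1 (hneg i) (gridPoint_mem_negFace hy)))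
    (fun _ i hy h => notMem_of_firstNotMem_eq h i.isLt (hpos i (gridPoint_mem_posFace hk hy)))
    (fun _ => firstNotMem_le)

theorem isEssentialFamily_negFace_posFace : IsEssentialFamily negFace posFace := by
  intro L hL
  choose U V hU hV hUV hnegU hposV hLc using fun i => (hL i).2
  choose s _ hfull using fun m : ℕ => exists_isFull_firstNotMem_gridPoint (D := m + 1)
    (k := m + 1) (fun i => (hUV i).mono_left (hnegU i)) hposV (by omega)
  set P : ℕ → ℕ → HilbertCube := fun m j => gridPoint (m + 1) (Kuhn.vertex (s m).1 (s m).2 j)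
  have hlabel : ∀ m, ∀ l ≤ m + 1, ∃ j, firstNotMem V (m + 1) (P m j) = l := fun m l hl =>
    let ⟨j, _, hj⟩ := hfull m l hl; ⟨j, hj⟩
  obtain ⟨p, φ, hφ, hp⟩ := CompactSpace.tendsto_subseq fun m => P m 0
  have hP : Tendsto (fun a : ℕ × ℕ => P (φ a.1) a.2) (atTop ×ˢ ⊤) (𝓝 p) := by
    refine tendsto_prod_top_of_dist_le (g := fun n j => P (φ n) j)
      (ε := fun n => 2 / ((φ n + 1 : ℕ) : ℝ)) hp ?_ fun n j i => ?_
    · exact (tendsto_const_div_atTop_nhds_zero_nat 2).comp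
        ((tendsto_add_atTop_nat 1).comp hφ.tendsto_atTop)
    · simpa [P] using dist_gridPoint_vertex_le (k := φ n + 1) (s (φ n)).1 (s (φ n)).2 j i
  have hclosure : ∀ (i : ℕ) (S : Set HilbertCube), (∀ m ≥ i, ∃ j, P m j ∈ S) → p ∈ closure S := by
    refine fun i S hS => mem_closure_iff_nhds.2 fun O hO => ?_
    have := (eventually_prod_principal_iff.1 (principal_univ ▸ hP hO)).and (eventually_ge_atTop i)
    obtain ⟨n, hn, hin⟩ := this.exists
    obtain ⟨j, hj⟩ := hS (φ n) (hin.trans (hφ.id_le n))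
    exact ⟨P (φ n) j, hn j trivial, hj⟩
  refine ⟨p, mem_iInter.2 fun i =>
    frontier_subset_of_compl_eq_union (hU i) (hV i) (hUV i) (hLc i) ?_⟩
  rw [frontier_eq_closure_inter_closure]
  refine ⟨hclosure i _ fun m hm => ?_, hclosure i _ fun m hm => ?_⟩
  · obtain ⟨j, hj⟩ := hlabel m (i + 1) (by omega)
    exact ⟨j, mem_of_lt_firstNotMem (D := m + 1) (by omega)⟩
  · obtain ⟨j, hj⟩ := hlabel m i (by omega)
    exact ⟨j, notMem_of_firstNotMem_eq hj (by omega)⟩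

lemma isClosed_negFace (i : ℕ) : IsClosed (negFace i) :=
  isClosed_eq (continuous_subtype_val.comp (continuous_apply i)) continuous_const

lemma isClosed_posFace (i : ℕ) : IsClosed (posFace i) :=
  isClosed_eq (continuous_subtype_val.comp (continuous_apply i)) continuous_const

lemma disjoint_negFace_posFace (i : ℕ) : Disjoint (negFace i) (posFace i) :=
  disjoint_left.2 fun x (h₁ : (x i : ℝ) = -1) (h₂ : (x i : ℝ) = 1) => by linarith

/-- In the Hilbert cube, the countably infinite family of pairs of opposite
faces `{(W_n^-, W_n^+) : n ∈ ℕ}` is essential; in particular the Hilbert cube is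
strongly infinite dimensional. -/
theorem hilbertCube_faces_essential_and_stronglyInfiniteDimensional :
    IsEssentialFamily negFace posFace ∧ StronglyInfiniteDimensional HilbertCube :=
  ⟨isEssentialFamily_negFace_posFace, negFace, posFace,
    fun i => ⟨isClosed_negFace i, isClosed_posFace i, disjoint_negFace_posFace i⟩,
    isEssentialFamily_negFace_posFace⟩
end

section
/- Let f : X → Y be a closed continuous surjection between separable metric spaces such that Y has property C and for every y ∈ Y the fibre f⁻¹(y) is weakly infinite dimensional. Then X is weakly infinite dimensional. -/
open Set

/-- Haver's property `C`: for every sequence of open covers `G 1, G 2, …` there is a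
sequence `H 1, H 2, …` of families of pairwise disjoint open sets, each member of `H i`
contained in a member of `G i`, with `⋃ i, H i` a cover. -/
def PropertyC (Y : Type*) [TopologicalSpace Y] : Prop :=
  ∀ G : ℕ → Set (Set Y),
    (∀ i, (∀ U ∈ G i, IsOpen U) ∧ ⋃₀ G i = univ) →
    ∃ H : ℕ → Set (Set Y),
      (∀ i, (∀ U ∈ H i, IsOpen U) ∧ (H i).Pairwise Disjoint ∧
        ∀ U ∈ H i, ∃ W ∈ G i, U ⊆ W) ∧
      ⋃ i, ⋃₀ H i = univ

/-!
Call a sequence of pairs of open sets `(P i, Q i)` with `P i ∪ Q i = X` *shrinkable* if there are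
disjoint open `U i ⊆ P i`, `V i ⊆ Q i` such that the sets `U i ∪ V i` cover `X`. Separators of the
pairs of closed sets `((Q i)ᶜ, (P i)ᶜ)` with empty intersection are exactly such shrinkings, so for
normal spaces weak infinite dimensionality means that every sequence of such pairs is shrinkable.

Split the indices into countably many infinite blocks. For a fixed block, each fibre `f ⁻¹' {y}`
shrinks the block; since `X` is hereditarily normal the relatively open pieces extend to disjoint
open sets of `X`, and since `f` is closed these cover `f ⁻¹' W` for a neighbourhood `W` of `y`.
Property `C` of `Y`, applied to the covers by such `W`, one cover per block, yields disjoint open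
families in `Y`; pulling them back glues the local shrinkings of each block into a single one, and
together the blocks cover `X`.
-/

open Function Filter Topology

def IsDisjointShrinking {X ι : Type*} [TopologicalSpace X] (P Q U V : ι → Set X) : Prop :=
  ∀ i, IsOpen (U i) ∧ IsOpen (V i) ∧ Disjoint (U i) (V i) ∧ U i ⊆ P i ∧ V i ⊆ Q i

def ShrinksBinaryCovers (ι X : Type*) [TopologicalSpace X] : Prop :=
  ∀ P Q : ι → Set X, (∀ i, IsOpen (P i) ∧ IsOpen (Q i) ∧ P i ∪ Q i = univ) →
    ∃ U V : ι → Set X, IsDisjointShrinking P Q U V ∧ ⋃ i, (U i ∪ V i) = univ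

theorem Set.disjoint_iUnion_preimage_inter {X Y ι : Type*} {f : X → Y} {W : ι → Set Y}
    (hW : Pairwise (Disjoint on W)) {a b : ι → Set X} (hab : ∀ i, Disjoint (a i) (b i)) :
    Disjoint (⋃ i, f ⁻¹' W i ∩ a i) (⋃ i, f ⁻¹' W i ∩ b i) := by
  refine disjoint_iUnion_left.mpr fun i => disjoint_iUnion_right.mpr fun j => ?_
  rcases eq_or_ne i j with rfl | hij
  · exact (hab i).mono inter_subset_right inter_subset_right
  · exact ((hW hij).preimage f).mono inter_subset_left inter_subset_left

section

variable {X Y : Type*} [TopologicalSpace X] [TopologicalSpace Y]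

theorem ShrinksBinaryCovers.reindex {ι κ : Type*} (h : ShrinksBinaryCovers κ X) (e : ι ≃ κ) :
    ShrinksBinaryCovers ι X := by
  intro P Q hPQ
  obtain ⟨U, V, hUV, hcover⟩ := h (P ∘ e.symm) (Q ∘ e.symm) fun j => hPQ (e.symm j)
  refine ⟨U ∘ e, V ∘ e, fun i => by simpa using hUV (e i), ?_⟩
  exact (e.surjective.iUnion_comp fun j => U j ∪ V j).trans hcover

theorem exists_open_superset_disjoint_closure [NormalSpace X] {A B : Set X} (hA : IsClosed A)
    (hB : IsClosed B) (hAB : Disjoint A B) :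
    ∃ S T : Set X, IsOpen S ∧ IsOpen T ∧ A ⊆ S ∧ B ⊆ T ∧ Disjoint (closure S) (closure T) := by
  obtain ⟨S, hSo, hAS, hSB⟩ :=
    normal_exists_closure_subset hA hB.isOpen_compl (subset_compl_iff_disjoint_right.mpr hAB)
  obtain ⟨T, hTo, hBT, hTS⟩ :=
    normal_exists_closure_subset hB isClosed_closure.isOpen_compl (subset_compl_comm.mp hSB)
  exact ⟨S, T, hSo, hTo, hAS, hBT, (subset_compl_iff_disjoint_left.mp hTS)⟩

theorem isSeparator_compl_union {A B S T U V : Set X} (hS : IsOpen S) (hT : IsOpen T)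
    (hU : IsOpen U) (hV : IsOpen V) (hST : Disjoint S T) (hUV : Disjoint U V)
    (hUT : Disjoint U T) (hVS : Disjoint V S) (hAS : A ⊆ S) (hBT : B ⊆ T) :
    IsSeparator A B ((U ∪ (S \ closure V)) ∪ (V ∪ (T \ closure U)))ᶜ := by
  have hU' : IsOpen (U ∪ (S \ closure V)) := hU.union (hS.sdiff isClosed_closure)
  have hV' : IsOpen (V ∪ (T \ closure U)) := hV.union (hT.sdiff isClosed_closure)
  refine ⟨(hU'.union hV').isClosed_compl, _, _, hU', hV', ?_, ?_, ?_, compl_compl _⟩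
  · rw [disjoint_union_left, disjoint_union_right, disjoint_union_right]
    exact ⟨⟨hUV, disjoint_sdiff_right.mono_left subset_closure⟩,
      disjoint_sdiff_left.mono_right subset_closure, hST.mono sdiff_subset sdiff_subset⟩
  · exact fun a ha => Or.inr ⟨hAS ha, fun h => disjoint_left.mp (hVS.closure_left hS) h (hAS ha)⟩
  · exact fun b hb => Or.inr ⟨hBT hb, fun h => disjoint_left.mp (hUT.closure_left hT) h (hBT hb)⟩

theorem ShrinksBinaryCovers.not_isEssentialFamily [NormalSpace X] {Γ : Type*}
    (h : ShrinksBinaryCovers Γ X) {A B : Γ → Set X}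
    (hAB : ∀ i, IsClosed (A i) ∧ IsClosed (B i) ∧ Disjoint (A i) (B i)) :
    ¬ IsEssentialFamily A B := by
  intro hess
  choose S T hSo hTo hAS hBT hST using fun i =>
    exists_open_superset_disjoint_closure (hAB i).1 (hAB i).2.1 (hAB i).2.2
  obtain ⟨U, V, hUV, hcover⟩ := h (fun i => (closure (T i))ᶜ) (fun i => (closure (S i))ᶜ)
    fun i => ⟨isClosed_closure.isOpen_compl, isClosed_closure.isOpen_compl, by
      rw [← compl_inter, (hST i).symm.inter_eq, compl_empty]⟩
  have hsep i := isSeparator_compl_union (hSo i) (hTo i) (hUV i).1 (hUV i).2.1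
    ((hST i).mono subset_closure subset_closure) (hUV i).2.2.1
    ((subset_compl_iff_disjoint_right.mp (hUV i).2.2.2.1).mono_right subset_closure)
    ((subset_compl_iff_disjoint_right.mp (hUV i).2.2.2.2).mono_right subset_closure)
    (hAS i) (hBT i)
  obtain ⟨x, hx⟩ := hess _ hsep
  obtain ⟨i, hi⟩ := mem_iUnion.mp (hcover.symm ▸ mem_univ x : x ∈ ⋃ i, (U i ∪ V i))
  exact mem_iInter.mp hx i (hi.elim (fun h => Or.inl (Or.inl h)) fun h => Or.inr (Or.inl h))

theorem shrinksBinaryCovers_of_forall_not_isEssentialFamily {Γ : Type*}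
    (h : ∀ A B : Γ → Set X, (∀ i, IsClosed (A i) ∧ IsClosed (B i) ∧ Disjoint (A i) (B i)) →
      ¬ IsEssentialFamily A B) :
    ShrinksBinaryCovers Γ X := by
  intro P Q hPQ
  have hAB i : IsClosed (Q i)ᶜ ∧ IsClosed (P i)ᶜ ∧ Disjoint (Q i)ᶜ (P i)ᶜ :=
    ⟨(hPQ i).2.1.isClosed_compl, (hPQ i).1.isClosed_compl, by
      rw [disjoint_iff_inter_eq_empty, ← compl_union, union_comm, (hPQ i).2.2, compl_univ]⟩
  obtain ⟨L, hL, hempty⟩ : ∃ L : Γ → Set X,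
      (∀ i, IsSeparator (Q i)ᶜ (P i)ᶜ (L i)) ∧ ¬ (⋂ i, L i).Nonempty := by
    simpa [IsEssentialFamily] using h _ _ hAB
  choose U V hUo hVo hUV hQU hPV hLc using fun i => (hL i).2
  refine ⟨U, V, fun i => ⟨hUo i, hVo i, hUV i, ?_, ?_⟩, ?_⟩
  · exact compl_subset_compl.mp ((hPV i).trans (subset_compl_iff_disjoint_left.mpr (hUV i)))
  · exact compl_subset_compl.mp ((hQU i).trans (subset_compl_iff_disjoint_right.mpr (hUV i)))
  · refine eq_univ_of_forall fun x => ?_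
    obtain ⟨i, hi⟩ : ∃ i, x ∉ L i := by simpa using fun hx : x ∈ ⋂ i, L i => hempty ⟨x, hx⟩
    exact mem_iUnion.mpr ⟨i, hLc i ▸ hi⟩

theorem shrinksBinaryCovers_nat_iff [NormalSpace X] :
    ShrinksBinaryCovers ℕ X ↔ ¬ StronglyInfiniteDimensional X := by
  constructor
  · rintro h ⟨A, B, hAB, hess⟩
    exact h.not_isEssentialFamily hAB hess
  · intro h
    exact shrinksBinaryCovers_of_forall_not_isEssentialFamily fun A B hAB hess => h ⟨A, B, hAB, hess⟩

theorem separatedNhds_image_val [CompletelyNormalSpace X] {Z : Set X} {u v : Set Z}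
    (hu : IsOpen u) (hv : IsOpen v) (huv : Disjoint u v) :
    SeparatedNhds (((↑) : Z → X) '' u) ((↑) '' v) := by
  have key {u v : Set Z} (hv : IsOpen v) (huv : Disjoint u v) :
      Disjoint (closure (((↑) : Z → X) '' u)) ((↑) '' v) := by
    rw [← subset_compl_iff_disjoint_left, image_subset_iff, preimage_compl,
      ← IsEmbedding.subtypeVal.closure_eq_preimage_closure_image, subset_compl_iff_disjoint_left]
    exact huv.closure_left hv
  exact separatedNhds_iff_disjoint.mpr (completely_normal (key hv huv) (key hu huv.symm).symm)

theorem IsClosedMap.exists_isOpen_preimage_subset_shrinking [CompletelyNormalSpace X]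
    {f : X → Y} (hf : IsClosedMap f) {ι : Type*} {y : Y}
    (hfib : ShrinksBinaryCovers ι (f ⁻¹' {y})) {P Q : ι → Set X}
    (hPQ : ∀ i, IsOpen (P i) ∧ IsOpen (Q i) ∧ P i ∪ Q i = univ) :
    ∃ W, IsOpen W ∧ y ∈ W ∧
      ∃ U V : ι → Set X, IsDisjointShrinking P Q U V ∧ f ⁻¹' W ⊆ ⋃ i, (U i ∪ V i) := by
  obtain ⟨u, v, huv, hcover⟩ := hfib (fun i => (↑) ⁻¹' P i) (fun i => (↑) ⁻¹' Q i) fun i =>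
    ⟨(hPQ i).1.preimage continuous_subtype_val, (hPQ i).2.1.preimage continuous_subtype_val, by
      rw [← preimage_union, (hPQ i).2.2, preimage_univ]⟩
  choose U V hUo hVo huU hvV hUV using fun i =>
    separatedNhds_image_val (huv i).1 (huv i).2.1 (huv i).2.2.1
  have hshrink : IsDisjointShrinking P Q (fun i => U i ∩ P i) (fun i => V i ∩ Q i) := fun i =>
    ⟨(hUo i).inter (hPQ i).1, (hVo i).inter (hPQ i).2.1,
      (hUV i).mono inter_subset_left inter_subset_left, inter_subset_right, inter_subset_right⟩
  have hfibre : f ⁻¹' {y} ⊆ ⋃ i, (U i ∩ P i ∪ V i ∩ Q i) := by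
    intro x hx
    obtain ⟨i, hi⟩ := mem_iUnion.mp (hcover.symm ▸ mem_univ (⟨x, hx⟩ : f ⁻¹' {y}))
    refine mem_iUnion.mpr ⟨i, hi.imp (fun h => ⟨huU i ⟨_, h, rfl⟩, (huv i).2.2.2.1 h⟩)
      fun h => ⟨hvV i ⟨_, h, rfl⟩, (huv i).2.2.2.2 h⟩⟩
  have hopen : IsOpen (⋃ i, (U i ∩ P i ∪ V i ∩ Q i)) :=
    isOpen_iUnion fun i => (hshrink i).1.union (hshrink i).2.1
  obtain ⟨W, hW, hWsub⟩ := mem_comap.mp (hf.comap_nhds_le (hopen.mem_nhdsSet.mpr hfibre))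
  obtain ⟨W', hW'W, hW'o, hyW'⟩ := mem_nhds_iff.mp hW
  exact ⟨W', hW'o, hyW', _, _, hshrink, (preimage_mono hW'W).trans hWsub⟩

theorem ShrinksBinaryCovers.of_isClosedMap [CompletelyNormalSpace X] {f : X → Y}
    (hf : Continuous f) (hclosed : IsClosedMap f) (hY : PropertyC Y)
    (hfib : ∀ y, ShrinksBinaryCovers ℕ (f ⁻¹' {y})) :
    ShrinksBinaryCovers (ℕ × ℕ) X := by
  intro P Q hPQ
  let IsTube (t : ℕ) (W : Set Y) : Prop := ∃ U V : ℕ → Set X,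
    IsDisjointShrinking (fun k => P (t, k)) (fun k => Q (t, k)) U V ∧
      f ⁻¹' W ⊆ ⋃ k, (U k ∪ V k)
  obtain ⟨H, hH, hHcover⟩ := hY (fun t => {W | IsOpen W ∧ IsTube t W}) fun t =>
    ⟨fun W hW => hW.1, eq_univ_of_forall fun y => by
      obtain ⟨W, hWo, hyW, hW⟩ :=
        hclosed.exists_isOpen_preimage_subset_shrinking (hfib y) fun k => hPQ (t, k)
      exact ⟨W, ⟨hWo, hW⟩, hyW⟩⟩
  have htube (t : ℕ) (V : H t) : IsTube t V := by
    obtain ⟨W, ⟨-, U, U', hUU', hWsub⟩, hVW⟩ := (hH t).2.2 V V.2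
    exact ⟨U, U', hUU', (preimage_mono hVW).trans hWsub⟩
  choose a b hab hcover using htube
  refine ⟨fun i => ⋃ V : H i.1, f ⁻¹' V ∩ a i.1 V i.2,
    fun i => ⋃ V : H i.1, f ⁻¹' V ∩ b i.1 V i.2, fun i => ⟨?_, ?_, ?_, ?_, ?_⟩, ?_⟩
  · exact isOpen_iUnion fun V => (((hH _).1 V V.2).preimage hf).inter (hab _ V _).1
  · exact isOpen_iUnion fun V => (((hH _).1 V V.2).preimage hf).inter (hab _ V _).2.1
  · exact disjoint_iUnion_preimage_inter (hH i.1).2.1.subtype fun V => (hab _ V _).2.2.1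
  · exact iUnion_subset fun V => inter_subset_right.trans (hab _ V _).2.2.2.1
  · exact iUnion_subset fun V => inter_subset_right.trans (hab _ V _).2.2.2.2
  · refine eq_univ_of_forall fun x => ?_
    obtain ⟨t, V, hV, hxV⟩ : ∃ t, ∃ V ∈ H t, f x ∈ V := by
      simpa using (hHcover.symm ▸ mem_univ (f x) : f x ∈ ⋃ i, ⋃₀ H i)
    obtain ⟨k, hk⟩ := mem_iUnion.mp (hcover t ⟨V, hV⟩ hxV)
    exact mem_iUnion.mpr ⟨(t, k), hk.imp (fun h => mem_iUnion.mpr ⟨⟨V, hV⟩, hxV, h⟩)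
      fun h => mem_iUnion.mpr ⟨⟨V, hV⟩, hxV, h⟩⟩

end

theorem weaklyInfiniteDimensional_of_closed_map_propertyC_general
    {X Y : Type*} [MetricSpace X] [MetricSpace Y]
    (f : X → Y) (hf : Continuous f) (hclosed : IsClosedMap f)
    (hY : PropertyC Y)
    (hfib : ∀ y : Y, ¬ StronglyInfiniteDimensional (f ⁻¹' {y})) :
    ¬ StronglyInfiniteDimensional X := by
  rw [← shrinksBinaryCovers_nat_iff]
  have hfib' (y : Y) : ShrinksBinaryCovers ℕ (f ⁻¹' {y}) :=
    shrinksBinaryCovers_nat_iff.mpr (hfib y)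
  exact (ShrinksBinaryCovers.of_isClosedMap hf hclosed hY hfib').reindex Nat.pairEquiv.symm

/-- If `f : X → Y` is a closed continuous surjection between separable
metric spaces, `Y` has property `C`, and every fibre `f ⁻¹' {y}` is weakly infinite
dimensional, then `X` is weakly infinite dimensional. -/
theorem weaklyInfiniteDimensional_of_closed_map_propertyC
    {X Y : Type*} [MetricSpace X] [TopologicalSpace.SeparableSpace X]
    [MetricSpace Y] [TopologicalSpace.SeparableSpace Y]
    (f : X → Y) (hf : Continuous f) (hclosed : IsClosedMap f)
    (hsurj : Function.Surjective f)
    (hY : PropertyC Y)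
    (hfib : ∀ y : Y, ¬ StronglyInfiniteDimensional (f ⁻¹' {y})) :
    ¬ StronglyInfiniteDimensional X :=
  weaklyInfiniteDimensional_of_closed_map_propertyC_general f hf hclosed hY hfib
end
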